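/- Let A be a graded Hopf algebra over a field of characteristic zero with dim A_0 = 1. If p_1, ..., p_n are primitive elements of A, then Δ̃^{n-1}(p_1⋯p_n) = Σ_{σ∈S_n} p_{σ(1)} ⊗ ⋯ ⊗ p_{σ(n)}. -/

import Mathlib

open TensorProduct

section TensorPowers

variable (K : Type) [Field K] (M : Type) [AddCommGroup M] [Module K M]

/-- Left-nested tensor powers: `TP 0 = M`, `TP (n+1) = TP n ⊗ M`, so `TP n = M^{⊗(n+1)}`. -/
noncomputable def TPM : ℕ → ModuleCat K
  | 0 => ModuleCat.of K M
  | n + 1 => ModuleCat.of K (TPM n ⊗[K] M)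

/-- The underlying type of `TPM`. -/
noncomputable abbrev TP (n : ℕ) : Type := TPM K M n

/-- Iterates of a map `D : M → M ⊗ M`: `iterD n = Δ̃ⁿ` when `D = Δ̃`. -/
noncomputable def iterD (D : M →ₗ[K] M ⊗[K] M) : (n : ℕ) → (M →ₗ[K] TP K M n)
  | 0 => LinearMap.id
  | n + 1 => (TensorProduct.map (iterD D n) (LinearMap.id : M →ₗ[K] M)).comp D

/-- The pure tensor `v 0 ⊗ ⋯ ⊗ v n` in `TP n = M^{⊗(n+1)}`. -/
noncomputable def tensorOf : (n : ℕ) → (Fin (n + 1) → M) → TP K M n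
  | 0, v => v 0
  | n + 1, v => (tensorOf n (fun i => v i.castSucc)) ⊗ₜ[K] v (Fin.last (n + 1))

/-- The image of `p ⊗ q` inside `M ⊗ M`. -/
noncomputable def tensorSub (p q : Submodule K M) : Submodule K (M ⊗[K] M) :=
  LinearMap.range (TensorProduct.map p.subtype q.subtype)

end TensorPowers

/-!
Since `Δ` is multiplicative and each `pᵢ` is primitive, `Δ(p₁⋯pₘ) = Σ_S p_S ⊗ p_{Sᶜ}`, where `S`
runs over the subsets of `{1, …, m}` and `p_S` is the product of the `pᵢ`, `i ∈ S`, in increasing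
order. Removing `S = ∅` and `S = everything` gives `Δ̃(p₁⋯pₘ)`, whose terms have a nonempty left
factor with fewer than `m` primitive factors. Hence `Δ̃ⁿ` kills every product of between `1` and `n`
primitives, and in `Δ̃ⁿ(p₁⋯pₙ₊₁) = Σ_S Δ̃ⁿ⁻¹(p_S) ⊗ p_{Sᶜ}` only the terms with `Sᶜ = {j}`
survive. Induction on `n` and splitting a permutation `σ` of `{1, …, n+1}` according to `σ(n+1)`
finish the proof.
-/

section Masks

variable {M : Type*} [Monoid M] {m : ℕ}

-- A subset `S ⊆ Fin m` is encoded by its indicator `c`, and `maskProd p c` is `p_S`.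
def maskProd (p : Fin m → M) (c : Fin m → Bool) : M :=
  (((List.finRange m).filter c).map p).prod

theorem length_filter_finRange_strictMono :
    StrictMono fun c : Fin m → Bool => ((List.finRange m).filter c).length := by
  intro c c' hlt
  obtain ⟨hle, i, hi⟩ := Pi.lt_def.mp hlt
  have hsub := (List.finRange m).monotone_filter_right fun a => Bool.le_iff_imp.mp (hle a)
  refine hsub.length_le.lt_of_ne fun hlen => hi.ne ?_
  have hmem := congrArg (i ∈ ·) (hsub.eq_of_length hlen)
  simpa using hmem

@[simp]
theorem filter_finRange_top : (List.finRange m).filter (⊤ : Fin m → Bool) = List.finRange m :=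
  List.filter_eq_self.mpr fun _ _ => rfl

@[simp]
theorem filter_finRange_bot : (List.finRange m).filter (⊥ : Fin m → Bool) = [] :=
  List.filter_eq_nil_iff.mpr fun _ _ => Bool.false_ne_true

theorem length_filter_finRange_pos {c : Fin m → Bool} (hc : ⊥ < c) :
    0 < ((List.finRange m).filter c).length := by
  simpa using length_filter_finRange_strictMono hc

theorem filter_finRange_eq (j : Fin m) :
    (List.finRange m).filter (fun i => decide (i = j)) = [j] :=
  ((List.pairwise_lt_finRange m).filter _).eq_of_mem_iff (List.pairwise_singleton _ _)
    (by simp)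

theorem filter_finRange_ne (j : Fin (m + 1)) :
    (List.finRange (m + 1)).filter (fun i => decide (i ≠ j))
      = (List.finRange m).map j.succAbove :=
  ((List.pairwise_lt_finRange _).filter _).eq_of_mem_iff
    (List.pairwise_map.mpr ((List.pairwise_lt_finRange m).imp (Fin.strictMono_succAbove j ·)))
    (by simp [Fin.exists_succAbove_eq_iff])

@[simp]
theorem maskProd_top (p : Fin m → M) : maskProd p ⊤ = (List.ofFn p).prod := by
  rw [maskProd, filter_finRange_top, ← List.ofFn_eq_map]

@[simp]
theorem maskProd_bot (p : Fin m → M) : maskProd p ⊥ = 1 := by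
  rw [maskProd, filter_finRange_bot, List.map_nil, List.prod_nil]

theorem maskProd_ne (p : Fin (m + 1) → M) (j : Fin (m + 1)) :
    maskProd p (fun i => decide (i ≠ j)) = (List.ofFn (p ∘ j.succAbove)).prod := by
  rw [maskProd, filter_finRange_ne, List.map_map, ← List.ofFn_eq_map]

theorem maskProd_compl_ne (p : Fin m → M) (j : Fin m) :
    maskProd p (fun i => decide (i ≠ j))ᶜ = p j := by
  have hcompl : (fun i => decide (i ≠ j))ᶜ = fun i => decide (i = j) := by
    ext i
    simp
  rw [hcompl, maskProd, filter_finRange_eq, List.map_singleton, List.prod_singleton]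

theorem maskProd_cons (p : Fin (m + 1) → M) (b : Bool) (c : Fin m → Bool) :
    maskProd p (Fin.cons b c) = (if b then p 0 else 1) * maskProd (fun i => p i.succ) c := by
  cases b <;> simp [maskProd, List.finRange_succ, List.filter_map, Function.comp_def]

theorem Fin.cons_compl (b : Bool) (c : Fin m → Bool) :
    (Fin.cons b c : Fin (m + 1) → Bool)ᶜ = Fin.cons (!b) cᶜ := by
  ext i
  cases i using Fin.cases <;> rfl

theorem exists_lt_decide_ne {ι : Type*} [DecidableEq ι] {c : ι → Bool} (hc : c < ⊤)
    (h : ∀ j, c ≠ fun i => decide (i ≠ j)) : ∃ j, c < fun i => decide (i ≠ j) := by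
  obtain ⟨j, hj⟩ : ∃ j, c j = false := by simpa [Function.ne_iff] using hc.ne
  refine ⟨j, lt_of_le_of_ne (fun i => ?_) (h j)⟩
  by_cases hij : i = j
  · simp [hij, hj]
  · simp [hij]

end Masks

section Permutations

variable {n : ℕ}

noncomputable def Equiv.Perm.snocSuccAbove (j : Fin (n + 1)) (τ : Equiv.Perm (Fin n)) :
    Equiv.Perm (Fin (n + 1)) :=
  Equiv.ofBijective (Fin.snoc (α := fun _ => Fin (n + 1)) (j.succAbove ∘ τ) j) <|
    Finite.injective_iff_bijective.mp <| Fin.snoc_injective_iff.mpr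
      ⟨Fin.succAbove_right_injective.comp τ.injective, fun ⟨i, hi⟩ => Fin.succAbove_ne j (τ i) hi⟩

theorem Equiv.Perm.snocSuccAbove_castSucc (j : Fin (n + 1)) (τ : Equiv.Perm (Fin n)) (i : Fin n) :
    snocSuccAbove j τ i.castSucc = j.succAbove (τ i) := by
  simp [snocSuccAbove]

theorem Equiv.Perm.snocSuccAbove_last (j : Fin (n + 1)) (τ : Equiv.Perm (Fin n)) :
    snocSuccAbove j τ (Fin.last n) = j := by
  simp [snocSuccAbove]

theorem Equiv.Perm.bijective_snocSuccAbove :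
    Function.Bijective fun x : Fin (n + 1) × Equiv.Perm (Fin n) => snocSuccAbove x.1 x.2 := by
  rw [Fintype.bijective_iff_injective_and_card]
  refine ⟨fun ⟨j, τ⟩ ⟨j', τ'⟩ h => ?_, by simp [Fintype.card_perm, Nat.factorial_succ]⟩
  have hj : j = j' := by simpa only [snocSuccAbove_last] using congr($h (Fin.last n))
  subst hj
  refine Prod.ext rfl (Equiv.ext fun i => Fin.succAbove_right_injective (p := j) ?_)
  simpa only [snocSuccAbove_castSucc] using congr($h i.castSucc)

theorem Equiv.Perm.sum_eq_sum_snocSuccAbove {M : Type*} [AddCommMonoid M]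
    (f : Equiv.Perm (Fin (n + 1)) → M) :
    ∑ σ, f σ = ∑ j, ∑ τ, f (snocSuccAbove j τ) := by
  rw [← Fintype.sum_prod_type']
  exact (Fintype.sum_bijective _ bijective_snocSuccAbove _ _ fun _ => rfl).symm

end Permutations

section Primitive

variable (R : Type*) {A : Type*} [CommSemiring R] [Semiring A] [Bialgebra R A]

def IsPrimitiveElem (a : A) : Prop :=
  CoalgebraStruct.comul (R := R) a = a ⊗ₜ[R] 1 + 1 ⊗ₜ[R] a

variable {R}

theorem comul_prod_ofFn {m : ℕ} (p : Fin m → A) (hp : ∀ i, IsPrimitiveElem R (p i)) :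
    CoalgebraStruct.comul (R := R) (List.ofFn p).prod
      = ∑ c, maskProd p c ⊗ₜ[R] maskProd p cᶜ := by
  induction m with
  | zero => simp [maskProd, Algebra.TensorProduct.one_def]
  | succ m ih =>
    rw [List.ofFn_succ, List.prod_cons, Bialgebra.comul_mul, hp 0,
      ih (fun i => p i.succ) fun i => hp i.succ, ← (Fin.consEquiv fun _ => Bool).sum_comp,
      Fintype.sum_prod_type, Fintype.sum_bool, add_mul, Finset.mul_sum, Finset.mul_sum]
    simp [Fin.consEquiv, Fin.cons_compl, maskProd_cons, Algebra.TensorProduct.tmul_mul_tmul]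

end Primitive

section Reduced

variable (R : Type*) (A : Type*) [CommRing R] [Ring A] [Bialgebra R A]

def reducedComul : A →ₗ[R] A ⊗[R] A :=
  CoalgebraStruct.comul - TensorProduct.mk R A A 1 - (TensorProduct.mk R A A).flip 1

variable {R A}

theorem reducedComul_apply (x : A) :
    reducedComul R A x = CoalgebraStruct.comul (R := R) x - 1 ⊗ₜ x - x ⊗ₜ 1 :=
  rfl

theorem reducedComul_prod_ofFn {m : ℕ} [NeZero m] (p : Fin m → A)
    (hp : ∀ i, IsPrimitiveElem R (p i)) :
    reducedComul R A (List.ofFn p).prod = ∑ c ∈ {⊥, ⊤}ᶜ, maskProd p c ⊗ₜ[R] maskProd p cᶜ := by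
  rw [reducedComul_apply, comul_prod_ofFn p hp, ← Finset.sum_compl_add_sum {⊥, ⊤},
    Finset.sum_pair bot_ne_top]
  simp only [compl_bot, compl_top, maskProd_bot, maskProd_top]
  abel

end Reduced

theorem iterD_succ_apply (K : Type) [Field K] {M : Type} [AddCommGroup M] [Module K M]
    (D : M →ₗ[K] M ⊗[K] M) (n : ℕ) (x : M) :
    iterD K M D (n + 1) x = TensorProduct.map (iterD K M D n) LinearMap.id (D x) :=
  rfl

theorem tensorOf_succ (K : Type) [Field K] {M : Type} [AddCommGroup M] [Module K M] (n : ℕ)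
    (v : Fin (n + 2) → M) :
    tensorOf K M (n + 1) v = tensorOf K M n (fun i => v i.castSucc) ⊗ₜ[K] v (Fin.last _) :=
  rfl

section IteratedReducedComul

variable {K : Type} [Field K] {A : Type} [Ring A] [Bialgebra K A]

theorem iterD_reducedComul_maskProd_eq_zero {n m : ℕ} (p : Fin m → A)
    (hp : ∀ i, IsPrimitiveElem K (p i)) {c : Fin m → Bool} (hc : ⊥ < c)
    (hlen : ((List.finRange m).filter c).length ≤ n) :
    iterD K A (reducedComul K A) n (maskProd p c) = 0 := by
  induction n generalizing m with
  | zero => exact absurd hlen (length_filter_finRange_pos hc).not_ge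
  | succ n ih =>
    set l := ((List.finRange m).filter c).map p with hl_def
    have : NeZero l.length := ⟨by simpa [l] using (length_filter_finRange_pos hc).ne'⟩
    have hl (i : Fin l.length) : IsPrimitiveElem K (l.get i) := by
      obtain ⟨j, -, hj⟩ := List.mem_map.mp (List.get_mem l i)
      exact hj ▸ hp j
    rw [iterD_succ_apply, maskProd, ← hl_def, ← List.ofFn_get l, reducedComul_prod_ofFn _ hl,
      map_sum]
    refine Finset.sum_eq_zero fun c' hc' => ?_
    obtain ⟨hbot, htop⟩ : ⊥ < c' ∧ c' < ⊤ := by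
      simpa [bot_lt_iff_ne_bot, lt_top_iff_ne_top, not_or] using hc'
    have hlt := length_filter_finRange_strictMono htop
    simp only [filter_finRange_top, List.length_finRange] at hlt
    have hl_len : l.length ≤ n + 1 := by simpa [l] using hlen
    rw [map_tmul, ih _ hl hbot (by omega), zero_tmul]
    rfl

theorem iterD_reducedComul_prod_ofFn {n : ℕ} (p : Fin (n + 1) → A)
    (hp : ∀ i, IsPrimitiveElem K (p i)) :
    iterD K A (reducedComul K A) n (List.ofFn p).prod
      = ∑ σ : Equiv.Perm (Fin (n + 1)), tensorOf K A n (p ∘ σ) := by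
  induction n with
  | zero =>
    rw [Fintype.sum_subsingleton (ι := Equiv.Perm (Fin 1)) _ 1, List.ofFn_succ, List.ofFn_zero,
      List.prod_singleton]
    rfl
  | succ n ih =>
    let maskNe (j : Fin (n + 1 + 1)) : Fin (n + 1 + 1) → Bool := fun i => decide (i ≠ j)
    have hmaskNe_mem : Finset.univ.image maskNe ⊆ {⊥, ⊤}ᶜ := by
      simp only [Finset.image_subset_iff, Finset.mem_compl, Finset.mem_insert,
        Finset.mem_singleton, not_or]
      intro j _
      obtain ⟨i, hij⟩ := exists_ne j
      exact ⟨fun h => by simpa [maskNe, hij] using congrFun h i,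
        fun h => by simpa [maskNe] using congrFun h j⟩
    have hvanish : ∀ c ∈ ({⊥, ⊤}ᶜ : Finset _), c ∉ Finset.univ.image maskNe →
        TensorProduct.map (iterD K A (reducedComul K A) n) LinearMap.id
          (maskProd p c ⊗ₜ[K] maskProd p cᶜ) = 0 := by
      intro c hc hc_img
      obtain ⟨hbot, htop⟩ : ⊥ < c ∧ c < ⊤ := by
        simpa [bot_lt_iff_ne_bot, lt_top_iff_ne_top, not_or] using hc
      obtain ⟨j, hj⟩ := exists_lt_decide_ne htop fun j h => hc_img (by simp [maskNe, h])
      have hlen := length_filter_finRange_strictMono hj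
      simp only [filter_finRange_ne, List.length_map, List.length_finRange] at hlen
      rw [map_tmul, iterD_reducedComul_maskProd_eq_zero p hp hbot (by omega), zero_tmul]
    rw [iterD_succ_apply, reducedComul_prod_ofFn p hp, map_sum,
      ← Finset.sum_subset hmaskNe_mem hvanish,
      Finset.sum_image fun a _ b _ h => by simpa [maskNe] using congrFun h a,
      Equiv.Perm.sum_eq_sum_snocSuccAbove]
    refine Finset.sum_congr rfl fun j _ => ?_
    rw [map_tmul, maskProd_ne, maskProd_compl_ne, ih (p ∘ j.succAbove) fun i => hp _, sum_tmul]
    refine Finset.sum_congr rfl fun τ _ => ?_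
    simp only [tensorOf_succ, Function.comp_apply, Equiv.Perm.snocSuccAbove_castSucc,
      Equiv.Perm.snocSuccAbove_last]
    rfl

end IteratedReducedComul

theorem stmt_10_general (K : Type) [Field K] (A : Type) [Ring A] [HopfAlgebra K A]
    (n : ℕ) (p : Fin (n + 1) → A)
    (hp : ∀ i, CoalgebraStruct.comul (R := K) (p i) = p i ⊗ₜ[K] 1 + (1 : A) ⊗ₜ[K] p i) :
    iterD K A
        (CoalgebraStruct.comul - TensorProduct.mk K A A 1 - (TensorProduct.mk K A A).flip 1) n
        (List.ofFn p).prod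
      = ∑ σ : Equiv.Perm (Fin (n + 1)), tensorOf K A n (p ∘ σ) :=
  iterD_reducedComul_prod_ofFn p hp

/-- In a graded Hopf algebra over a field of characteristic zero with
`dim A₀ = 1`, if `p 0, …, p n` are primitive then
`Δ̃ⁿ (p 0 ⋯ p n) = Σ_{σ ∈ S_{n+1}} p (σ 0) ⊗ ⋯ ⊗ p (σ n)`. -/
theorem stmt_10 (K : Type) [Field K] [CharZero K] (A : Type) [Ring A] [HopfAlgebra K A]
    (𝒜 : ℕ → Submodule K A) [DirectSum.Decomposition 𝒜]
    (hmul : ∀ n m : ℕ, ∀ x ∈ 𝒜 n, ∀ y ∈ 𝒜 m, x * y ∈ 𝒜 (n + m))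
    (hcomul : ∀ n : ℕ, ∀ x ∈ 𝒜 n,
      CoalgebraStruct.comul (R := K) x
        ∈ ⨆ p ∈ Finset.HasAntidiagonal.antidiagonal n, tensorSub K A (𝒜 p.1) (𝒜 p.2))
    (h0 : Module.finrank K (𝒜 0) = 1)
    (n : ℕ) (p : Fin (n + 1) → A)
    (hp : ∀ i, CoalgebraStruct.comul (R := K) (p i) = p i ⊗ₜ[K] 1 + (1 : A) ⊗ₜ[K] p i) :
    iterD K A
        (CoalgebraStruct.comul - TensorProduct.mk K A A 1 - (TensorProduct.mk K A A).flip 1) n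
        (List.ofFn p).prod
      = ∑ σ : Equiv.Perm (Fin (n + 1)), tensorOf K A n (p ∘ σ) :=
  stmt_10_general K A n p hp
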